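/- arXiv:1001.0085 — 2 statements merged into one kernel-verified Lean document; each statement's English description precedes it below -/
import Mathlib

section
/- For n×n positive definite complex matrices A, B and n×n positive semidefinite complex matrices C, D, one has Tr[(A−B)(B⁻¹−A⁻¹) + (C−D)((B+D)⁻¹−(A+C)⁻¹)] ≥ |Tr[(C−D)(B+D)⁻¹(A−B)(A+C)⁻¹]|, where both traces are real numbers. -/
open Matrix ComplexOrder

/-!
Put `X = A - B`, `Y = C - D`, `S = (A + C)⁻¹`, `T = (B + D)⁻¹`. The resolvent identities
`B⁻¹ - A⁻¹ = B⁻¹ X A⁻¹` and `T - S = T (X + Y) S` write the left-hand trace as `e₁ + t + e₂` with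
`e₁ = Tr[X B⁻¹ X A⁻¹] ≥ 0`, `e₂ = Tr[Y T Y S] ≥ 0` and `t = Tr[Y T X S]` the right-hand trace;
`t` is real because `t + e₂ = Tr[Y (T - S)]` is the trace of a product of Hermitian matrices.
Then `e₁ + t + e₂ ≥ t` is clear, and `e₁ + t + e₂ ≥ -t` holds because inversion is
operator antitone (`T ≤ B⁻¹`, `S ≤ A⁻¹`), so that `e₁ + 2t + e₂ ≥ Tr[(X + Y) T (X + Y) S] ≥ 0`.
-/

namespace Matrix

section Trace

variable {R n : Type*} [CommSemiring R] [Fintype n]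

theorem trace_add_mul_mul_add_mul (P Q T S : Matrix n n R) :
    ((P + Q) * T * (P + Q) * S).trace = (P * T * P * S).trace + (P * T * Q * S).trace +
      (Q * T * P * S).trace + (Q * T * Q * S).trace := by
  simp only [add_mul, mul_add, trace_add]
  abel

variable [StarRing R] {P Q U V : Matrix n n R}

theorem IsHermitian.isSelfAdjoint_trace_mul (hP : P.IsHermitian) (hQ : Q.IsHermitian) :
    IsSelfAdjoint (P * Q).trace := by
  rw [IsSelfAdjoint, ← trace_conjTranspose, conjTranspose_mul, hP.eq, hQ.eq, trace_mul_comm]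

theorem IsHermitian.star_trace_mul_mul_mul (hP : P.IsHermitian) (hQ : Q.IsHermitian)
    (hU : U.IsHermitian) (hV : V.IsHermitian) :
    star (P * Q * U * V).trace = (U * Q * P * V).trace := by
  rw [← trace_conjTranspose]
  simp only [conjTranspose_mul, hP.eq, hQ.eq, hU.eq, hV.eq]
  rw [trace_mul_comm]
  simp only [Matrix.mul_assoc]

end Trace

theorem PosSemidef.mul_mul_self_of_isHermitian {R n : Type*} [Ring R] [PartialOrder R]
    [StarRing R] [Fintype n] {P X : Matrix n n R} (hP : P.PosSemidef) (hX : X.IsHermitian) :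
    (X * P * X).PosSemidef := by
  simpa only [hX.eq] using hP.conjTranspose_mul_mul_same X

variable {n : Type*} [Fintype n] [DecidableEq n]

theorem PosSemidef.trace_mul_nonneg {P Q : Matrix n n ℂ} (hP : P.PosSemidef)
    (hQ : Q.PosSemidef) : 0 ≤ (P * Q).trace := by
  open scoped MatrixOrder Norms.L2Operator in
  obtain ⟨R, rfl⟩ := CStarAlgebra.nonneg_iff_eq_star_mul_self.mp hP.nonneg
  rw [star_eq_conjTranspose, Matrix.mul_assoc, trace_mul_comm]
  exact (hQ.mul_mul_conjTranspose_same R).trace_nonneg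

open scoped MatrixOrder Norms.L2Operator in
theorem PosDef.posSemidef_inv_sub_inv_add {B D : Matrix n n ℂ} (hB : B.PosDef)
    (hD : D.PosSemidef) : (B⁻¹ - (B + D)⁻¹).PosSemidef := by
  have h := CStarAlgebra.ringInverse_le_ringInverse (le_add_of_nonneg_right hD.nonneg)
    (isStrictlyPositive_iff_posDef.mpr hB)
  rwa [← nonsing_inv_eq_ringInverse, ← nonsing_inv_eq_ringInverse] at h

theorem trace_mul_mul_mul_le_of_posSemidef_sub {X P P' Q Q' : Matrix n n ℂ}
    (hX : X.IsHermitian) (hP' : P'.PosSemidef) (hP : (P - P').PosSemidef)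
    (hQ' : Q'.PosSemidef) (hQ : (Q - Q').PosSemidef) :
    (X * P' * X * Q').trace ≤ (X * P * X * Q).trace := by
  have hQ_psd : Q.PosSemidef := by simpa using hQ'.add hQ
  have h : X * P * X * Q - X * P' * X * Q' = X * (P - P') * X * Q + X * P' * X * (Q - Q') := by
    noncomm_ring
  rw [← sub_nonneg, ← trace_sub, h, trace_add]
  exact add_nonneg ((hP.mul_mul_self_of_isHermitian hX).trace_mul_nonneg hQ_psd)
    ((hP'.mul_mul_self_of_isHermitian hX).trace_mul_nonneg hQ)

theorem im_trace_mul_mul_mul_eq_zero_of_sub_eq {X Y S T : Matrix n n ℂ} (hY : Y.IsHermitian)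
    (hS : S.PosSemidef) (hT : T.PosSemidef) (hTS : T - S = T * (X + Y) * S) :
    (Y * T * X * S).trace.im = 0 := by
  have h_sum : (Y * (T - S)).trace = (Y * T * X * S).trace + (Y * T * Y * S).trace := by
    rw [hTS, ← trace_add]
    congr 1
    noncomm_ring
  have h_im := congrArg Complex.im h_sum
  rw [Complex.conj_eq_iff_im.mp (hY.isSelfAdjoint_trace_mul (hT.1.sub hS.1)), Complex.add_im,
    (Complex.le_def.mp ((hT.mul_mul_self_of_isHermitian hY).trace_mul_nonneg hS)).2.symm] at h_im
  simpa using h_im.symm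

end Matrix

theorem Complex.abs_re_le_re_of_nonneg_sub_of_nonneg_add {z w : ℂ} (hw : w.im = 0)
    (h₁ : 0 ≤ z - w) (h₂ : 0 ≤ z + w) : z.im = 0 ∧ |w.re| ≤ z.re := by
  obtain ⟨h₁re, h₁im⟩ := Complex.le_def.mp h₁
  obtain ⟨h₂re, -⟩ := Complex.le_def.mp h₂
  simp only [zero_re, zero_im, sub_re, sub_im, add_re] at h₁re h₁im h₂re
  exact ⟨by linarith, abs_le.mpr ⟨by linarith, by linarith⟩⟩

theorem trace_refined_ineq {n : ℕ} (A B C D : Matrix (Fin n) (Fin n) ℂ)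
    (hA : A.PosDef) (hB : B.PosDef) (hC : C.PosSemidef) (hD : D.PosSemidef) :
    (((A - B) * (B⁻¹ - A⁻¹) + (C - D) * ((B + D)⁻¹ - (A + C)⁻¹)).trace).im = 0 ∧
    (((C - D) * (B + D)⁻¹ * (A - B) * (A + C)⁻¹).trace).im = 0 ∧
    (((A - B) * (B⁻¹ - A⁻¹) + (C - D) * ((B + D)⁻¹ - (A + C)⁻¹)).trace).re ≥
      |(((C - D) * (B + D)⁻¹ * (A - B) * (A + C)⁻¹).trace).re| := by
  have hAC := hA.add_posSemidef hC
  have hBD := hB.add_posSemidef hD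
  have hBA : B⁻¹ - A⁻¹ = B⁻¹ * (A - B) * A⁻¹ := inv_sub_inv (iff_of_true hB.isUnit hA.isUnit)
  have hTS : (B + D)⁻¹ - (A + C)⁻¹ = (B + D)⁻¹ * (A - B + (C - D)) * (A + C)⁻¹ := by
    rw [inv_sub_inv (iff_of_true hBD.isUnit hAC.isUnit)]
    abel_nf
  set X := A - B
  set Y := C - D
  set S := (A + C)⁻¹
  set T := (B + D)⁻¹
  have hX : X.IsHermitian := hA.isHermitian.sub hB.isHermitian
  have hY : Y.IsHermitian := hC.isHermitian.sub hD.isHermitian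
  have hS : S.PosSemidef := hAC.inv.posSemidef
  have hT : T.PosSemidef := hBD.inv.posSemidef
  have ht := im_trace_mul_mul_mul_eq_zero_of_sub_eq hY hS hT hTS
  have h_split : (X * (B⁻¹ - A⁻¹) + Y * (T - S)).trace =
      (X * B⁻¹ * X * A⁻¹).trace + (Y * T * X * S).trace + (Y * T * Y * S).trace := by
    rw [hBA, hTS, ← trace_add, ← trace_add]
    congr 1
    noncomm_ring
  have he₁ :=
    (hB.inv.posSemidef.mul_mul_self_of_isHermitian hX).trace_mul_nonneg hA.inv.posSemidef
  have he₂ := (hT.mul_mul_self_of_isHermitian hY).trace_mul_nonneg hS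
  have hf := trace_mul_mul_mul_le_of_posSemidef_sub hX hT (hB.posSemidef_inv_sub_inv_add hD) hS
    (hA.posSemidef_inv_sub_inv_add hC)
  have h_sq := (hT.mul_mul_self_of_isHermitian (hX.add hY)).trace_mul_nonneg hS
  rw [trace_add_mul_mul_add_mul, ← hY.star_trace_mul_mul_mul hT.1 hX hS.1,
    show star _ = _ from Complex.conj_eq_iff_im.mpr ht] at h_sq
  obtain ⟨h_im, h_le⟩ := Complex.abs_re_le_re_of_nonneg_sub_of_nonneg_add ht
    (z := (X * (B⁻¹ - A⁻¹) + Y * (T - S)).trace)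
    (by rw [h_split]; linear_combination he₁ + he₂) (by rw [h_split]; linear_combination h_sq + hf)
  exact ⟨h_im, ht, h_le⟩
end

section
/- For n×n positive definite complex matrices A, B, n×n positive semidefinite complex matrices C, D, and an n×n Hermitian complex matrix X, one has Tr[X A⁻¹ X B⁻¹] ≥ Tr[X (A+C)⁻¹ X (B+D)⁻¹], where both traces are real numbers. -/
/-!
Inversion is operator antitone, so `(A + C)⁻¹ ≤ A⁻¹` and `(B + D)⁻¹ ≤ B⁻¹` in the Loewner order.
On positive semidefinite `P`, `Q` the map `(P, Q) ↦ Tr[X P X Q]` is monotone in each argument,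
because `X P X` is positive semidefinite and the trace of a product of two positive semidefinite
matrices is nonnegative. All these traces are `≥ 0` in the partial order of `ℂ`, hence real.
-/

open Matrix ComplexOrder
open scoped MatrixOrder

namespace Matrix

variable {n 𝕜 : Type*} [Fintype n] [RCLike 𝕜]

lemma PosSemidef.trace_mul_nonneg_s2 {M N : Matrix n n 𝕜} (hM : M.PosSemidef) (hN : N.PosSemidef) :
    0 ≤ (M * N).trace := by
  classical
  obtain ⟨B, rfl⟩ := CStarAlgebra.nonneg_iff_eq_star_mul_self.mp hM.nonneg
  rw [star_eq_conjTranspose, Matrix.mul_assoc, trace_mul_comm]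
  exact (hN.mul_mul_conjTranspose_same B).trace_nonneg

lemma IsHermitian.trace_mul_mul_mul_nonneg {X P Q : Matrix n n 𝕜} (hX : X.IsHermitian)
    (hP : P.PosSemidef) (hQ : Q.PosSemidef) : 0 ≤ (X * P * X * Q).trace := by
  have hXPX := hP.conjTranspose_mul_mul_same X
  rw [hX.eq] at hXPX
  exact hXPX.trace_mul_nonneg_s2 hQ

lemma IsHermitian.trace_mul_mul_mul_mono {X P P' Q Q' : Matrix n n 𝕜} (hX : X.IsHermitian)
    (hP : 0 ≤ P) (hPP' : P ≤ P') (hQ : 0 ≤ Q) (hQQ' : Q ≤ Q') :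
    (X * P * X * Q).trace ≤ (X * P' * X * Q').trace := by
  have hstepP := hX.trace_mul_mul_mul_nonneg (le_iff.mp hPP') (hQ.trans hQQ').posSemidef
  have hstepQ := hX.trace_mul_mul_mul_nonneg hP.posSemidef (le_iff.mp hQQ')
  rw [← sub_nonneg]
  convert add_nonneg hstepP hstepQ using 1
  simp only [Matrix.mul_sub, Matrix.sub_mul, trace_sub]
  ring

open scoped Matrix.Norms.L2Operator in
lemma PosDef.inv_add_le_inv [DecidableEq n] {A C : Matrix n n ℂ} (hA : A.PosDef)
    (hC : C.PosSemidef) : (A + C)⁻¹ ≤ A⁻¹ := by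
  simp only [nonsing_inv_eq_ringInverse]
  exact CStarAlgebra.ringInverse_le_ringInverse (le_add_of_nonneg_right hC.nonneg)
    (isStrictlyPositive_iff_posDef.mpr hA)

end Matrix

theorem trace_lemma_BLD {n : ℕ} (A B C D X : Matrix (Fin n) (Fin n) ℂ)
    (hA : A.PosDef) (hB : B.PosDef) (hC : C.PosSemidef) (hD : D.PosSemidef)
    (hX : X.IsHermitian) :
    ((X * A⁻¹ * X * B⁻¹).trace).im = 0 ∧
    ((X * (A + C)⁻¹ * X * (B + D)⁻¹).trace).im = 0 ∧
    ((X * A⁻¹ * X * B⁻¹).trace).re ≥ ((X * (A + C)⁻¹ * X * (B + D)⁻¹).trace).re := by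
  have hAC := (hA.add_posSemidef hC).inv.posSemidef
  have hBD := (hB.add_posSemidef hD).inv.posSemidef
  obtain ⟨-, him_zero⟩ := Complex.le_def.mp (hX.trace_mul_mul_mul_nonneg hAC hBD)
  obtain ⟨hre, him_eq⟩ := Complex.le_def.mp <| hX.trace_mul_mul_mul_mono hAC.nonneg
    (hA.inv_add_le_inv hC) hBD.nonneg (hB.inv_add_le_inv hD)
  exact ⟨by rw [← him_eq, ← him_zero, Complex.zero_im], by rw [← him_zero, Complex.zero_im], hre⟩
end
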